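/- The infinite series Σ_{i=1}^{∞} 1/(i(2i−1)(2i+1)) converges and equals 2·ln 2 − 1 (equivalently ln 4 − 1). -/

import Mathlib

/-! Since `1 / (i (2i - 1) (2i + 1)) = 1 / (2i - 1) + 1 / (2i + 1) - 1 / i`, the `N`-th partial sum
is `2 (H_{2N} - H_N) + 1 / (2N + 1) - 1`. Both `H_{2N}` and `H_N` differ from the logarithm of their
index by `γ + o(1)`, so `H_{2N} - H_N → log 2`. -/

open Filter Real Topology

theorem tendsto_harmonic_two_mul_sub_harmonic :
    Tendsto (fun n : ℕ => (harmonic (2 * n) : ℝ) - harmonic n) atTop (𝓝 (log 2)) := by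
  have h_two_mul : Tendsto (fun n : ℕ => (harmonic (2 * n) : ℝ) - log ↑(2 * n)) atTop
      (𝓝 eulerMascheroniConstant) :=
    tendsto_harmonic_sub_log.comp (tendsto_id.const_mul_atTop' two_pos)
  have h_diff := (h_two_mul.sub tendsto_harmonic_sub_log).add_const (log 2)
  rw [sub_self, zero_add] at h_diff
  refine h_diff.congr' ?_
  filter_upwards [eventually_ne_atTop 0] with n hn
  rw [Nat.cast_mul, Nat.cast_ofNat, log_mul two_ne_zero (Nat.cast_ne_zero.mpr hn)]
  ring

theorem sum_range_inv_i_mul_odd_eq_harmonic (N : ℕ) :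
    ∑ n ∈ Finset.range N,
      (1 : ℝ) / (((n : ℝ) + 1) * (2 * ((n : ℝ) + 1) - 1) * (2 * ((n : ℝ) + 1) + 1))
      = 2 * ((harmonic (2 * N) : ℝ) - harmonic N) + 1 / (2 * (N : ℝ) + 1) - 1 := by
  induction N with
  | zero => simp
  | succ N ih =>
    rw [Finset.sum_range_succ, ih, show 2 * (N + 1) = 2 * N + 1 + 1 by ring,
      harmonic_succ, harmonic_succ, harmonic_succ]
    push_cast
    rw [show 2 * ((N : ℝ) + 1) - 1 = 2 * N + 1 by ring]
    field_simp
    ring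

/-- Σ_{i=1}^{∞} 1/(i(2i−1)(2i+1)) converges and equals 2·ln 2 − 1
(indexing i = n+1 for n : ℕ). -/
theorem sum_inv_i_mul_odd_eq_log_four_sub_one :
    (Summable fun n : ℕ =>
      (1 : ℝ) / (((n:ℝ)+1) * (2*((n:ℝ)+1) - 1) * (2*((n:ℝ)+1) + 1))) ∧
    (∑' n : ℕ, (1 : ℝ) / (((n:ℝ)+1) * (2*((n:ℝ)+1) - 1) * (2*((n:ℝ)+1) + 1)))
      = 2 * Real.log 2 - 1 := by
  have h_nonneg (n : ℕ) :
      0 ≤ (1 : ℝ) / (((n:ℝ)+1) * (2*((n:ℝ)+1) - 1) * (2*((n:ℝ)+1) + 1)) := by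
    have : (0 : ℝ) ≤ 2 * ((n : ℝ) + 1) - 1 := by linarith [n.cast_nonneg (α := ℝ)]
    positivity
  have h_tail : Tendsto (fun N : ℕ => 1 / (2 * (N : ℝ) + 1)) atTop (𝓝 0) := by
    simpa only [one_div, Function.comp_def] using tendsto_inv_atTop_zero.comp <|
      tendsto_atTop_add_const_right _ 1 <| tendsto_natCast_atTop_atTop.const_mul_atTop two_pos
  have h_partial := ((tendsto_harmonic_two_mul_sub_harmonic.const_mul 2).add h_tail).sub_const 1
  rw [add_zero] at h_partial
  have h_sum := (hasSum_iff_tendsto_nat_of_nonneg h_nonneg _).mpr <|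
    h_partial.congr fun N => (sum_range_inv_i_mul_odd_eq_harmonic N).symm
  exact ⟨h_sum.summable, h_sum.tsum_eq⟩
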